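/- arXiv:1109.6463 — 2 statements merged into one kernel-verified Lean document; each statement's English description precedes it below -/
import Mathlib

section
/- Let g: ℝ → ℝ be integrable and let φ ∈ ℂ^m with ‖φ‖ = 1. Then for every E ∈ ℝ, ε > 0 and δ > 0, |F(ε, δ)| ≤ (ε·c_0)^{-1}·‖g‖_{L¹}. -/
/-!
With `A = H_λ - E + iδ + iεV` and `ψ = A⁻¹ B φ`, Hermiticity of `B` gives
`⟨φ, K φ⟩ = conj ⟨ψ, A ψ⟩`, whose imaginary part `δ ‖ψ‖² + ε ⟨ψ, V ψ⟩` is at least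
`ε c₀ ‖B ψ‖²`. On the other hand `|⟨φ, K φ⟩| = |⟨φ, B ψ⟩| ≤ ‖B ψ‖` by Cauchy–Schwarz, so
`ε c₀ |⟨φ, K φ⟩|² ≤ |⟨φ, K φ⟩|`, i.e. `|⟨φ, K φ⟩| ≤ (ε c₀)⁻¹` uniformly in `λ`.
Integrating against `g` gives the bound.
-/

open Matrix MeasureTheory
open scoped ComplexOrder

noncomputable section

/-- The regularized matrix `H_λ - E·I + iδ·I + iε·V` where `H_λ = H0 + λV`. -/
def regMat (m : ℕ) (H0 V : Matrix (Fin m) (Fin m) ℂ) (E lam eps del : ℝ) :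
    Matrix (Fin m) (Fin m) ℂ :=
  H0 + (lam : ℂ) • V - (E : ℂ) • 1 + (Complex.I * (del : ℂ)) • 1 + (Complex.I * (eps : ℂ)) • V

/-- `K(λ, ε, δ) = B (H_λ - E + iδ + iεV)⁻¹ B`. -/
def kMat (m : ℕ) (H0 V B : Matrix (Fin m) (Fin m) ℂ) (E lam eps del : ℝ) :
    Matrix (Fin m) (Fin m) ℂ :=
  B * (regMat m H0 V E lam eps del)⁻¹ * B

/-- `F(ε, δ) = ∫ g(λ) ⟨φ, K(λ, ε, δ) φ⟩ dλ`. -/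
def Fval (m : ℕ) (H0 V B : Matrix (Fin m) (Fin m) ℂ) (E : ℝ) (g : ℝ → ℝ)
    (φ : Fin m → ℂ) (eps del : ℝ) : ℂ :=
  ∫ lam : ℝ, (g lam : ℂ) * (star φ ⬝ᵥ (kMat m H0 V B E lam eps del).mulVec φ)

lemma le_inv_mul_of_sq_le_mul_of_mul_le {t s p c : ℝ} (hc : 0 < c) (ht : 0 ≤ t) (hp : 0 ≤ p)
    (hsq : t ^ 2 ≤ p * s) (hlin : c * s ≤ t) : t ≤ c⁻¹ * p := by
  rw [le_inv_mul_iff₀ hc]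
  rcases ht.eq_or_lt with rfl | htpos
  · simpa using hp
  · nlinarith

namespace Matrix

variable {n : Type*} [Fintype n]

lemma star_dotProduct_self_eq_sum_norm_sq (x : n → ℂ) :
    star x ⬝ᵥ x = ((∑ i, ‖x i‖ ^ 2 : ℝ) : ℂ) := by
  push_cast
  exact Finset.sum_congr rfl fun i _ => Complex.conj_mul' (x i)

lemma norm_star_dotProduct_sq_le (x y : n → ℂ) :
    ‖star x ⬝ᵥ y‖ ^ 2 ≤ (∑ i, ‖x i‖ ^ 2) * ∑ i, ‖y i‖ ^ 2 := by
  have h := norm_inner_le_norm (𝕜 := ℂ) (WithLp.toLp 2 x) (WithLp.toLp 2 y)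
  rw [EuclideanSpace.inner_toLp_toLp, dotProduct_comm] at h
  rw [← EuclideanSpace.norm_sq_eq (WithLp.toLp 2 x), ← EuclideanSpace.norm_sq_eq (WithLp.toLp 2 y),
    ← mul_pow]
  gcongr

lemma IsHermitian.star_dotProduct_mul_self_mulVec {B : Matrix n n ℂ} (hB : B.IsHermitian)
    (x : n → ℂ) :
    star x ⬝ᵥ (B * B) *ᵥ x = ((∑ i, ‖(B *ᵥ x) i‖ ^ 2 : ℝ) : ℂ) := by
  rw [← mulVec_mulVec, dotProduct_mulVec, ← hB.eq, ← star_mulVec, hB.eq,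
    star_dotProduct_self_eq_sum_norm_sq]

lemma mul_sum_norm_mulVec_sq_le_re {V B : Matrix n n ℂ} (hB : B.IsHermitian) {c : ℝ}
    (hVB : (V - (c : ℂ) • (B * B)).PosSemidef) (x : n → ℂ) :
    c * ∑ i, ‖(B *ᵥ x) i‖ ^ 2 ≤ (star x ⬝ᵥ V *ᵥ x).re := by
  have h := hVB.re_dotProduct_nonneg x
  simp only [sub_mulVec, smul_mulVec, dotProduct_sub, dotProduct_smul, smul_eq_mul,
    hB.star_dotProduct_mul_self_mulVec, RCLike.re_to_complex, Complex.sub_re,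
    Complex.re_ofReal_mul, Complex.ofReal_re] at h
  linarith

theorem norm_star_dotProduct_mul_inv_mul_mulVec_le [DecidableEq n] {A B : Matrix n n ℂ}
    (hB : B.IsHermitian) {c : ℝ} (hc : 0 < c)
    (hA : ∀ x, c * ∑ i, ‖(B *ᵥ x) i‖ ^ 2 ≤ (star x ⬝ᵥ A *ᵥ x).im) (φ : n → ℂ) :
    ‖star φ ⬝ᵥ (B * A⁻¹ * B) *ᵥ φ‖ ≤ c⁻¹ * ∑ i, ‖φ i‖ ^ 2 := by
  by_cases hdet : IsUnit A.det
  swap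
  -- `A⁻¹ = 0` for singular `A`, so the bound is then trivial.
  · rw [nonsing_inv_apply_not_isUnit A hdet]
    simp only [mul_zero, zero_mul, zero_mulVec, dotProduct_zero, norm_zero]
    positivity
  set ψ := A⁻¹ *ᵥ (B *ᵥ φ)
  have hAψ : A *ᵥ ψ = B *ᵥ φ := by rw [mulVec_mulVec, mul_nonsing_inv A hdet, one_mulVec]
  have hK : star φ ⬝ᵥ (B * A⁻¹ * B) *ᵥ φ = star φ ⬝ᵥ B *ᵥ ψ := by
    rw [← mulVec_mulVec, ← mulVec_mulVec]
  have hBφ : star (B *ᵥ φ) = star φ ᵥ* B := by rw [star_mulVec, hB.eq]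
  have hKψ : star φ ⬝ᵥ B *ᵥ ψ = star (star ψ ⬝ᵥ A *ᵥ ψ) := by
    rw [dotProduct_mulVec, ← hBφ, ← hAψ, star_dotProduct]
  have hlower : c * ∑ i, ‖(B *ᵥ ψ) i‖ ^ 2 ≤ ‖star φ ⬝ᵥ B *ᵥ ψ‖ :=
    calc _ ≤ (star ψ ⬝ᵥ A *ᵥ ψ).im := hA ψ
      _ ≤ ‖star ψ ⬝ᵥ A *ᵥ ψ‖ := Complex.im_le_norm _
      _ = ‖star φ ⬝ᵥ B *ᵥ ψ‖ := by rw [hKψ, norm_star]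
  rw [hK]
  exact le_inv_mul_of_sq_le_mul_of_mul_le hc (norm_nonneg _) (by positivity)
    (norm_star_dotProduct_sq_le φ (B *ᵥ ψ)) hlower

end Matrix

lemma im_star_dotProduct_regMat_mulVec {m : ℕ} {H0 V : Matrix (Fin m) (Fin m) ℂ}
    (hH0 : H0.IsHermitian) (hV : V.IsHermitian) (E lam eps del : ℝ) (x : Fin m → ℂ) :
    (star x ⬝ᵥ regMat m H0 V E lam eps del *ᵥ x).im
      = del * ∑ i, ‖x i‖ ^ 2 + eps * (star x ⬝ᵥ V *ᵥ x).re := by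
  have hH0x := hH0.im_star_dotProduct_mulVec_self x
  have hVx := hV.im_star_dotProduct_mulVec_self x
  simp only [RCLike.im_to_complex] at hH0x hVx
  simp only [regMat, add_mulVec, sub_mulVec, smul_mulVec, one_mulVec, dotProduct_add,
    dotProduct_sub, dotProduct_smul, smul_eq_mul, star_dotProduct_self_eq_sum_norm_sq,
    Complex.add_im, Complex.sub_im, Complex.mul_im, Complex.mul_re, Complex.I_re, Complex.I_im,
    Complex.ofReal_re, Complex.ofReal_im, hH0x, hVx]
  ring

lemma norm_star_dotProduct_kMat_mulVec_le {m : ℕ} {H0 V B : Matrix (Fin m) (Fin m) ℂ}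
    (hH0 : H0.IsHermitian) (hV : V.IsHermitian) (hB : B.IsHermitian) {c0 : ℝ} (hc0 : 0 < c0)
    (hVB : (V - (c0 : ℂ) • (B * B)).PosSemidef) (E lam : ℝ) {eps del : ℝ} (heps : 0 < eps)
    (hdel : 0 ≤ del) (φ : Fin m → ℂ) :
    ‖star φ ⬝ᵥ kMat m H0 V B E lam eps del *ᵥ φ‖ ≤ (eps * c0)⁻¹ * ∑ i, ‖φ i‖ ^ 2 := by
  refine norm_star_dotProduct_mul_inv_mul_mulVec_le hB (by positivity) (fun x => ?_) φ
  rw [im_star_dotProduct_regMat_mulVec hH0 hV, mul_assoc]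
  have hVx := mul_le_mul_of_nonneg_left (mul_sum_norm_mulVec_sq_le_re hB hVB x) heps.le
  have hdel_term : 0 ≤ del * ∑ i, ‖x i‖ ^ 2 := by positivity
  linarith

theorem Fval_apriori_bound_general
    (m : ℕ) (H0 V B : Matrix (Fin m) (Fin m) ℂ)
    (hH0 : H0.IsHermitian) (hV : V.IsHermitian) (hB : B.PosSemidef)
    (c0 : ℝ) (hc0 : 0 < c0) (hVB : (V - (c0 : ℂ) • (B * B)).PosSemidef)
    (g : ℝ → ℝ) (hg1 : Integrable g)
    (φ : Fin m → ℂ) (hφ : (∑ i, ‖φ i‖ ^ 2) = 1)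
    (E : ℝ) (eps del : ℝ) (heps : 0 < eps) (hdel : 0 < del) :
    ‖Fval m H0 V B E g φ eps del‖ ≤ (eps * c0)⁻¹ * ∫ x, |g x| := by
  have hK (lam : ℝ) : ‖star φ ⬝ᵥ kMat m H0 V B E lam eps del *ᵥ φ‖ ≤ (eps * c0)⁻¹ := by
    simpa only [hφ, mul_one] using
      norm_star_dotProduct_kMat_mulVec_le hH0 hV hB.isHermitian hc0 hVB E lam heps hdel.le φ
  calc ‖Fval m H0 V B E g φ eps del‖ ≤ ∫ lam, (eps * c0)⁻¹ * |g lam| := by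
        refine norm_integral_le_of_norm_le (hg1.abs.const_mul _) (ae_of_all _ fun lam => ?_)
        rw [norm_mul, Complex.norm_real, Real.norm_eq_abs, mul_comm]
        exact mul_le_mul_of_nonneg_right (hK lam) (abs_nonneg _)
    _ = (eps * c0)⁻¹ * ∫ x, |g x| := integral_const_mul _ _

/-- `|F(ε, δ)| ≤ (ε c0)⁻¹ ‖g‖₁` for all `E ∈ ℝ`, `ε > 0`, `δ > 0`. -/
theorem Fval_apriori_bound
    (m : ℕ) (hm : 1 ≤ m) (H0 V B : Matrix (Fin m) (Fin m) ℂ)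
    (hH0 : H0.IsHermitian) (hV : V.IsHermitian) (hB : B.PosSemidef)
    (c0 : ℝ) (hc0 : 0 < c0) (hVB : (V - (c0 : ℂ) • (B * B)).PosSemidef)
    (g : ℝ → ℝ) (hg1 : Integrable g)
    (φ : Fin m → ℂ) (hφ : (∑ i, ‖φ i‖ ^ 2) = 1)
    (E : ℝ) (eps del : ℝ) (heps : 0 < eps) (hdel : 0 < del) :
    ‖Fval m H0 V B E g φ eps del‖ ≤ (eps * c0)⁻¹ * ∫ x, |g x| :=
  Fval_apriori_bound_general m H0 V B hH0 hV hB c0 hc0 hVB g hg1 φ hφ E eps del heps hdel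

end
end

section
/- Let g: ℝ → ℝ be continuously differentiable with g, g' ∈ L¹(ℝ), and let φ ∈ ℂ^m with ‖φ‖ = 1. Then for every E ∈ ℝ, every δ > 0 and every ε ∈ (0, 1), |F(ε, δ)| ≤ c_0^{-1}·‖g'‖_{L¹}·|log ε| + c_0^{-1}·‖g‖_{L¹}. -/
/-!
Writing `H_λ - E + iδ + iεV = A + (λ + iε) V` with `A = H₀ - E + iδ`, the integrand of `F(ε, δ)`
is `g(λ) f(λ + iε)` for the function `f z = ⟨Bφ, (A + z V)⁻¹ Bφ⟩`, holomorphic on the upper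
half-plane. For `x = (A + z V)⁻¹ Bφ` and `t = f z` one has
`c₀ Im z ‖Bx‖² ≤ Im ⟨x, (A + z V) x⟩ = -Im t ≤ |t| ≤ ‖Bx‖`, whence `|f z| ≤ (c₀ Im z)⁻¹`.
Since `∂_ε f(λ + iε) = i ∂_λ f(λ + iε)`, differentiating under the integral (dominated thanks to
Cauchy's estimate for `f'`) and integrating by parts in `λ` gives `|∂_ε F| ≤ (c₀ ε)⁻¹ ‖g'‖₁`.
Integrating this bound from `ε` to `1` produces the logarithm, and `|F(1, δ)| ≤ c₀⁻¹ ‖g‖₁`.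
-/

open Matrix MeasureTheory
open scoped ComplexOrder

noncomputable section

open Complex Set Filter Topology Metric
open UpperHalfPlane (upperHalfPlaneSet isOpen_upperHalfPlaneSet)
open WithLp (toLp)

theorem integrable_ofReal_mul_of_norm_le {h : ℝ → ℝ} {k : ℝ → ℂ} {M : ℝ} (hh : Integrable h)
    (hk : Continuous k) (hkM : ∀ x, ‖k x‖ ≤ M) : Integrable fun x => (h x : ℂ) * k x :=
  hh.ofReal.mul_bdd hk.aestronglyMeasurable (ae_of_all _ hkM)

theorem norm_integral_ofReal_mul_le {h : ℝ → ℝ} {k : ℝ → ℂ} {M : ℝ} (hh : Integrable h)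
    (hkM : ∀ x, ‖k x‖ ≤ M) : ‖∫ x, (h x : ℂ) * k x‖ ≤ M * ∫ x, |h x| := by
  rw [← integral_const_mul]
  refine norm_integral_le_of_norm_le (hh.abs.const_mul M) (ae_of_all _ fun x => ?_)
  rw [norm_mul, norm_real, Real.norm_eq_abs, mul_comm]
  exact mul_le_mul_of_nonneg_right (hkM x) (abs_nonneg _)

theorem norm_sub_le_mul_neg_log_of_norm_deriv_le {E : Type*} [NormedAddCommGroup E]
    [NormedSpace ℝ E] {Φ Φ' : ℝ → E} {K ε : ℝ} (hε : 0 < ε) (hε1 : ε ≤ 1)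
    (hΦ : ∀ s ∈ Icc ε 1, HasDerivAt Φ (Φ' s) s) (hΦ' : ∀ s ∈ Icc ε 1, ‖Φ' s‖ ≤ K / s) :
    ‖Φ ε - Φ 1‖ ≤ K * -Real.log ε := by
  -- In the variable `u = -log s` the derivative bound `K / s` becomes the constant `K`.
  have hexp : ∀ u ∈ Icc 0 (-Real.log ε), Real.exp (-u) ∈ Icc ε 1 := fun u hu =>
    ⟨by simpa [Real.exp_log hε] using Real.exp_le_exp.2 (neg_le_neg hu.2),
      Real.exp_le_one_iff.2 (neg_nonpos.2 hu.1)⟩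
  have hderiv : ∀ u ∈ Icc 0 (-Real.log ε), HasDerivWithinAt (fun u => Φ (Real.exp (-u)))
      ((Real.exp (-u) * -1) • Φ' (Real.exp (-u))) (Icc 0 (-Real.log ε)) u := fun u hu =>
    ((hΦ _ (hexp u hu)).scomp u
      ((Real.hasDerivAt_exp (-u)).comp u (hasDerivAt_neg u))).hasDerivWithinAt
  have hbound : ∀ u ∈ Ico 0 (-Real.log ε), ‖(Real.exp (-u) * -1) • Φ' (Real.exp (-u))‖ ≤ K := by
    intro u hu
    have hpos := Real.exp_pos (-u)
    rw [norm_smul, norm_mul, norm_neg, norm_one, mul_one, Real.norm_of_nonneg hpos.le]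
    calc Real.exp (-u) * ‖Φ' (Real.exp (-u))‖ ≤ Real.exp (-u) * (K / Real.exp (-u)) :=
          mul_le_mul_of_nonneg_left (hΦ' _ (hexp u (Ico_subset_Icc_self hu))) hpos.le
      _ = K := by field_simp
  have hL : 0 ≤ -Real.log ε := neg_nonneg.2 (Real.log_nonpos hε.le hε1)
  simpa [Real.exp_log hε] using
    norm_image_sub_le_of_norm_deriv_le_segment' hderiv hbound _ ⟨hL, le_rfl⟩

section HalfPlane

variable {f : ℂ → ℂ} {C : ℝ} {g : ℝ → ℝ} {s : ℝ}

def horizontalPairing (g : ℝ → ℝ) (f : ℂ → ℂ) (s : ℝ) : ℂ :=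
  ∫ x : ℝ, (g x : ℂ) * f (x + s * I)

theorem nonneg_of_norm_le_div_im (hfC : ∀ z : ℂ, 0 < z.im → ‖f z‖ ≤ C / z.im) : 0 ≤ C := by
  simpa using (norm_nonneg _).trans (hfC I (by simp))

theorem norm_deriv_le_of_norm_le_div_im (hf : DifferentiableOn ℂ f upperHalfPlaneSet)
    (hfC : ∀ z : ℂ, 0 < z.im → ‖f z‖ ≤ C / z.im) {z : ℂ} (hz : 0 < z.im) :
    ‖deriv f z‖ ≤ 4 * C / z.im ^ 2 := by
  have hC := nonneg_of_norm_le_div_im hfC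
  have hR : 0 < z.im / 2 := by positivity
  have him : ∀ w ∈ closedBall z (z.im / 2), z.im / 2 ≤ w.im := fun w hw => by
    have h := (abs_im_le_norm (w - z)).trans (mem_closedBall_iff_norm.1 hw)
    rw [sub_im] at h
    linarith [(abs_le.1 h).1]
  have hball : closedBall z (z.im / 2) ⊆ {w | 0 < w.im} := fun w hw => hR.trans_le (him w hw)
  -- Cauchy's estimate on the circle of radius `Im z / 2`, on which `Im w ≥ Im z / 2`.
  calc ‖deriv f z‖ ≤ (C / (z.im / 2)) / (z.im / 2) := by
        refine norm_deriv_le_of_forall_mem_sphere_norm_le hR (hf.diffContOnCl_ball hball)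
          fun w hw => ?_
        have hw' := him w (sphere_subset_closedBall hw)
        exact (hfC w (hR.trans_le hw')).trans (div_le_div_of_nonneg_left hC hR hw')
    _ = 4 * C / z.im ^ 2 := by field_simp; ring

theorem continuous_comp_add_mul_I (hf : ContinuousOn f upperHalfPlaneSet) (hs : 0 < s) :
    Continuous fun x : ℝ => f (x + s * I) :=
  hf.comp_continuous (by fun_prop) fun x => by simpa using hs

theorem hasDerivAt_comp_add_mul_I_re {x : ℝ} (hf : DifferentiableAt ℂ f (x + s * I)) :
    HasDerivAt (fun t : ℝ => f (t + s * I)) (deriv f (x + s * I)) x :=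
  (hf.hasDerivAt.comp_add_const (x : ℂ) (s * I)).comp_ofReal

theorem hasDerivAt_comp_add_mul_I_im {x : ℝ} (hf : DifferentiableAt ℂ f (x + s * I)) :
    HasDerivAt (fun t : ℝ => f (x + t * I)) (deriv f (x + s * I) * I) s := by
  have hline : HasDerivAt (fun t : ℝ => (x : ℂ) + t * I) I s := by
    simpa using ((hasDerivAt_id s).ofReal_comp.mul_const I).const_add (x : ℂ)
  exact hf.hasDerivAt.comp s hline

theorem differentiableAt_add_mul_I (hf : DifferentiableOn ℂ f upperHalfPlaneSet) (x : ℝ)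
    (hs : 0 < s) : DifferentiableAt ℂ f (x + s * I) :=
  hf.differentiableAt (isOpen_upperHalfPlaneSet.mem_nhds (by simpa using hs))

theorem norm_comp_add_mul_I_le (hfC : ∀ z : ℂ, 0 < z.im → ‖f z‖ ≤ C / z.im) (x : ℝ)
    (hs : 0 < s) : ‖f (x + s * I)‖ ≤ C / s := by
  simpa using hfC (x + s * I) (by simpa using hs)

theorem norm_deriv_comp_add_mul_I_le (hf : DifferentiableOn ℂ f upperHalfPlaneSet)
    (hfC : ∀ z : ℂ, 0 < z.im → ‖f z‖ ≤ C / z.im) (x : ℝ) (hs : 0 < s) :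
    ‖deriv f (x + s * I)‖ ≤ 4 * C / s ^ 2 := by
  simpa using norm_deriv_le_of_norm_le_div_im hf hfC (z := x + s * I) (by simpa using hs)

theorem integral_mul_deriv_comp_add_mul_I (hf : DifferentiableOn ℂ f upperHalfPlaneSet)
    (hfC : ∀ z : ℂ, 0 < z.im → ‖f z‖ ≤ C / z.im) (hg : Differentiable ℝ g)
    (hg1 : Integrable g) (hg2 : Integrable (deriv g)) (hs : 0 < s) :
    ∫ x : ℝ, (g x : ℂ) * deriv f (x + s * I) = -∫ x : ℝ, ((deriv g x : ℝ) : ℂ) * f (x + s * I) := by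
  have hcont := continuous_comp_add_mul_I hf.continuousOn hs
  have hcont' := continuous_comp_add_mul_I ((hf.deriv isOpen_upperHalfPlaneSet).continuousOn) hs
  exact integral_mul_deriv_eq_deriv_mul_of_integrable
    (fun x _ => (hg x).hasDerivAt.ofReal_comp)
    (fun x _ => hasDerivAt_comp_add_mul_I_re (differentiableAt_add_mul_I hf x hs))
    (integrable_ofReal_mul_of_norm_le hg1 hcont' (norm_deriv_comp_add_mul_I_le hf hfC · hs))
    (integrable_ofReal_mul_of_norm_le hg2 hcont (norm_comp_add_mul_I_le hfC · hs))
    (integrable_ofReal_mul_of_norm_le hg1 hcont (norm_comp_add_mul_I_le hfC · hs))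

theorem hasDerivAt_horizontalPairing_of_integrable (hf : DifferentiableOn ℂ f upperHalfPlaneSet)
    (hfC : ∀ z : ℂ, 0 < z.im → ‖f z‖ ≤ C / z.im) (hg1 : Integrable g) (hs : 0 < s) :
    HasDerivAt (horizontalPairing g f) (∫ x : ℝ, (g x : ℂ) * (deriv f (x + s * I) * I)) s := by
  have hC := nonneg_of_norm_le_div_im hfC
  have hhalf : ∀ t ∈ ball s (s / 2), s / 2 < t := fun t ht => by
    rw [mem_ball, Real.dist_eq, abs_sub_lt_iff] at ht
    linarith
  have hpos : ∀ t ∈ ball s (s / 2), 0 < t := fun t ht => (half_pos hs).trans (hhalf t ht)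
  have hbound : ∀ x, ∀ t ∈ ball s (s / 2),
      ‖(g x : ℂ) * (deriv f (x + t * I) * I)‖ ≤ 16 * C / s ^ 2 * |g x| := by
    intro x t ht
    rw [norm_mul, norm_mul, norm_I, mul_one, norm_real, Real.norm_eq_abs, mul_comm]
    refine mul_le_mul_of_nonneg_right
      ((norm_deriv_comp_add_mul_I_le hf hfC x (hpos t ht)).trans ?_) (abs_nonneg _)
    calc 4 * C / t ^ 2 ≤ 4 * C / (s / 2) ^ 2 := by gcongr; exact (hhalf t ht).le
      _ = 16 * C / s ^ 2 := by ring
  have hderiv_cont :=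
    continuous_comp_add_mul_I ((hf.deriv isOpen_upperHalfPlaneSet).continuousOn) hs
  exact (hasDerivAt_integral_of_dominated_loc_of_deriv_le
    (F := fun (t : ℝ) x => (g x : ℂ) * f (x + t * I))
    (F' := fun (t : ℝ) x => (g x : ℂ) * (deriv f (x + t * I) * I))
    (ball_mem_nhds s (half_pos hs))
    (eventually_of_mem (ball_mem_nhds s (half_pos hs)) fun t ht =>
      hg1.ofReal.aestronglyMeasurable.mul
        (continuous_comp_add_mul_I hf.continuousOn (hpos t ht)).aestronglyMeasurable)
    (integrable_ofReal_mul_of_norm_le hg1 (continuous_comp_add_mul_I hf.continuousOn hs)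
      (norm_comp_add_mul_I_le hfC · hs))
    (hg1.ofReal.aestronglyMeasurable.mul (hderiv_cont.mul continuous_const).aestronglyMeasurable)
    (ae_of_all _ hbound) (hg1.abs.const_mul _)
    (ae_of_all _ fun x t ht => (hasDerivAt_comp_add_mul_I_im
      (differentiableAt_add_mul_I hf x (hpos t ht))).const_mul _)).2

theorem hasDerivAt_horizontalPairing (hf : DifferentiableOn ℂ f upperHalfPlaneSet)
    (hfC : ∀ z : ℂ, 0 < z.im → ‖f z‖ ≤ C / z.im) (hg : Differentiable ℝ g)
    (hg1 : Integrable g) (hg2 : Integrable (deriv g)) (hs : 0 < s) :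
    HasDerivAt (horizontalPairing g f)
      (-I * ∫ x : ℝ, ((deriv g x : ℝ) : ℂ) * f (x + s * I)) s := by
  convert hasDerivAt_horizontalPairing_of_integrable hf hfC hg1 hs using 1
  calc -I * ∫ x : ℝ, ((deriv g x : ℝ) : ℂ) * f (x + s * I)
      = I * ∫ x : ℝ, (g x : ℂ) * deriv f (x + s * I) := by
        rw [integral_mul_deriv_comp_add_mul_I hf hfC hg hg1 hg2 hs]
        ring
    _ = ∫ x : ℝ, (g x : ℂ) * (deriv f (x + s * I) * I) := by
        rw [← integral_const_mul]
        congr 1 with x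
        ring

theorem norm_horizontalPairing_le (hf : DifferentiableOn ℂ f upperHalfPlaneSet)
    (hfC : ∀ z : ℂ, 0 < z.im → ‖f z‖ ≤ C / z.im) (hg : Differentiable ℝ g)
    (hg1 : Integrable g) (hg2 : Integrable (deriv g)) {ε : ℝ} (hε0 : 0 < ε) (hε1 : ε ≤ 1) :
    ‖horizontalPairing g f ε‖ ≤ C * (∫ x, |deriv g x|) * |Real.log ε| + C * ∫ x, |g x| := by
  have hslope : ‖horizontalPairing g f ε - horizontalPairing g f 1‖
      ≤ C * (∫ x, |deriv g x|) * -Real.log ε := by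
    refine norm_sub_le_mul_neg_log_of_norm_deriv_le hε0 hε1
      (fun s hs => hasDerivAt_horizontalPairing hf hfC hg hg1 hg2 (hε0.trans_le hs.1))
      fun s hs => ?_
    rw [norm_mul, norm_neg, norm_I, one_mul]
    calc _ ≤ C / s * ∫ x, |deriv g x| :=
          norm_integral_ofReal_mul_le hg2 (norm_comp_add_mul_I_le hfC · (hε0.trans_le hs.1))
      _ = _ := by ring
  have hone : ‖horizontalPairing g f 1‖ ≤ C * ∫ x, |g x| := by
    simpa [horizontalPairing] using
      norm_integral_ofReal_mul_le hg1 (norm_comp_add_mul_I_le hfC · one_pos)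
  rw [abs_of_nonpos (Real.log_nonpos hε0.le hε1)]
  calc ‖horizontalPairing g f ε‖
      ≤ ‖horizontalPairing g f ε - horizontalPairing g f 1‖ + ‖horizontalPairing g f 1‖ :=
        norm_le_norm_sub_add _ _
    _ ≤ _ := add_le_add hslope hone

end HalfPlane

section Pencil

variable {n : Type*} [Fintype n]

theorem norm_star_dotProduct_le (u v : n → ℂ) : ‖star u ⬝ᵥ v‖ ≤ ‖toLp 2 u‖ * ‖toLp 2 v‖ := by
  rw [dotProduct_comm, ← EuclideanSpace.inner_toLp_toLp]
  exact norm_inner_le_norm _ _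

theorem star_dotProduct_self (v : n → ℂ) : star v ⬝ᵥ v = ((‖toLp 2 v‖ ^ 2 : ℝ) : ℂ) := by
  rw [dotProduct_comm, ← EuclideanSpace.inner_toLp_toLp, inner_self_eq_norm_sq_to_K]
  norm_cast

theorem Matrix.IsHermitian.star_mulVec_dotProduct {B : Matrix n n ℂ} (hB : B.IsHermitian)
    (x y : n → ℂ) : star (B *ᵥ x) ⬝ᵥ y = star x ⬝ᵥ B *ᵥ y := by
  rw [star_mulVec, hB.eq, dotProduct_mulVec]

theorem Matrix.PosSemidef.of_sub_smul_mul_self {V B : Matrix n n ℂ} {c : ℝ}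
    (hB : B.IsHermitian) (hc : 0 ≤ c) (hVB : (V - (c : ℂ) • (B * B)).PosSemidef) :
    V.PosSemidef := by
  have hBB : (B * B).PosSemidef := by
    simpa [hB.eq] using posSemidef_conjTranspose_mul_self B
  simpa using hVB.add (hBB.smul (a := c) hc)

theorem le_re_star_dotProduct_mulVec {V B : Matrix n n ℂ} {c : ℝ} (hB : B.IsHermitian)
    (hVB : (V - (c : ℂ) • (B * B)).PosSemidef) (x : n → ℂ) :
    c * ‖toLp 2 (B *ᵥ x)‖ ^ 2 ≤ (star x ⬝ᵥ V *ᵥ x).re := by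
  have h := (Complex.le_def.1 (hVB.dotProduct_mulVec_nonneg x)).1
  rw [sub_mulVec, dotProduct_sub, smul_mulVec, dotProduct_smul, ← mulVec_mulVec,
    ← hB.star_mulVec_dotProduct, star_dotProduct_self] at h
  simp only [zero_re, sub_re, smul_eq_mul, mul_re, ofReal_re, ofReal_im, zero_mul, sub_zero,
    sub_nonneg] at h
  exact h

theorem im_star_dotProduct_pencil [DecidableEq n] {H V : Matrix n n ℂ} (hH : H.IsHermitian)
    (hV : V.IsHermitian) (δ : ℝ) (z : ℂ) (x : n → ℂ) :
    (star x ⬝ᵥ (H + (I * δ) • 1 + z • V) *ᵥ x).im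
      = δ * ‖toLp 2 x‖ ^ 2 + z.im * (star x ⬝ᵥ V *ᵥ x).re := by
  have hHx := hH.im_star_dotProduct_mulVec_self x
  have hVx := hV.im_star_dotProduct_mulVec_self x
  simp only [RCLike.im_to_complex] at hHx hVx
  simp only [add_mulVec, smul_mulVec, one_mulVec, dotProduct_add, dotProduct_smul,
    star_dotProduct_self, smul_eq_mul, add_im, mul_im, mul_re, hHx, hVx, ofReal_re, ofReal_im,
    I_re, I_im]
  ring

theorem isUnit_of_forall_im_star_dotProduct_pos [DecidableEq n] {M : Matrix n n ℂ}
    (h : ∀ x ≠ 0, 0 < (star x ⬝ᵥ M *ᵥ x).im) : IsUnit M := by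
  rw [isUnit_iff_isUnit_det, isUnit_iff_ne_zero]
  intro hdet
  obtain ⟨x, hx, hMx⟩ := exists_mulVec_eq_zero_iff.2 hdet
  simpa [hMx] using h x hx

theorem isUnit_pencil [DecidableEq n] {H V : Matrix n n ℂ} (hH : H.IsHermitian)
    (hV : V.PosSemidef) {δ : ℝ} (hδ : 0 < δ) {z : ℂ} (hz : 0 ≤ z.im) :
    IsUnit (H + (I * δ) • 1 + z • V) := by
  refine isUnit_of_forall_im_star_dotProduct_pos fun x hx => ?_
  rw [im_star_dotProduct_pencil hH hV.isHermitian]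
  have hVx : 0 ≤ (star x ⬝ᵥ V *ᵥ x).re := (Complex.le_def.1 (hV.dotProduct_mulVec_nonneg x)).1
  have hx : 0 < ‖toLp 2 x‖ := norm_pos_iff.2 (by simpa using hx)
  positivity

theorem norm_star_mulVec_dotProduct_le_inv {M B : Matrix n n ℂ} (hB : B.IsHermitian) {a : ℝ}
    (ha : 0 < a) {φ x : n → ℂ} (hφ : ‖toLp 2 φ‖ ≤ 1) (hMx : M *ᵥ x = B *ᵥ φ)
    (hM : a * ‖toLp 2 (B *ᵥ x)‖ ^ 2 ≤ (star x ⬝ᵥ M *ᵥ x).im) :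
    ‖star (B *ᵥ φ) ⬝ᵥ x‖ ≤ a⁻¹ := by
  set t := star (B *ᵥ φ) ⬝ᵥ x
  have hCS : ‖t‖ ≤ ‖toLp 2 (B *ᵥ x)‖ :=
    calc ‖t‖ = ‖star φ ⬝ᵥ B *ᵥ x‖ := congrArg norm (hB.star_mulVec_dotProduct φ x)
      _ ≤ ‖toLp 2 φ‖ * ‖toLp 2 (B *ᵥ x)‖ := norm_star_dotProduct_le _ _
      _ ≤ ‖toLp 2 (B *ᵥ x)‖ := mul_le_of_le_one_left (norm_nonneg _) hφ
  have him : (star x ⬝ᵥ M *ᵥ x).im = -t.im := by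
    rw [hMx, star_dotProduct, star_def, conj_im]
  have hquad : a * ‖t‖ ^ 2 ≤ ‖t‖ :=
    calc a * ‖t‖ ^ 2 ≤ a * ‖toLp 2 (B *ᵥ x)‖ ^ 2 := by gcongr
      _ ≤ -t.im := hM.trans_eq him
      _ ≤ ‖t‖ := (neg_le_abs t.im).trans (abs_im_le_norm t)
  rw [← one_div, le_div_iff₀ ha]
  nlinarith [norm_nonneg t]

def resolventForm [DecidableEq n] (A V : Matrix n n ℂ) (ψ : n → ℂ) (z : ℂ) : ℂ :=
  star ψ ⬝ᵥ (A + z • V)⁻¹ *ᵥ ψ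

theorem norm_resolventForm_le [DecidableEq n] {H V B : Matrix n n ℂ} (hH : H.IsHermitian)
    (hB : B.IsHermitian) {c : ℝ} (hc : 0 < c) (hVB : (V - (c : ℂ) • (B * B)).PosSemidef)
    {δ : ℝ} (hδ : 0 < δ) {φ : n → ℂ} (hφ : ‖toLp 2 φ‖ ≤ 1) {z : ℂ} (hz : 0 < z.im) :
    ‖resolventForm (H + (I * δ) • 1) V (B *ᵥ φ) z‖ ≤ c⁻¹ / z.im := by
  have hV := PosSemidef.of_sub_smul_mul_self hB hc.le hVB
  set M := H + (I * δ) • 1 + z • V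
  have hMx : M *ᵥ (M⁻¹ *ᵥ B *ᵥ φ) = B *ᵥ φ := by
    rw [mulVec_mulVec, mul_nonsing_inv _ ((isUnit_iff_isUnit_det M).1
      (isUnit_pencil hH hV hδ hz.le)), one_mulVec]
  rw [div_eq_mul_inv, ← mul_inv]
  refine norm_star_mulVec_dotProduct_le_inv hB (mul_pos hc hz) hφ hMx ?_
  rw [im_star_dotProduct_pencil hH hV.isHermitian]
  have hVx := le_re_star_dotProduct_mulVec hB hVB (M⁻¹ *ᵥ B *ᵥ φ)
  have hδx : 0 ≤ δ * ‖toLp 2 (M⁻¹ *ᵥ B *ᵥ φ)‖ ^ 2 := by positivity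
  nlinarith

open scoped Matrix.Norms.L2Operator in
theorem differentiableOn_resolventForm [DecidableEq n] (A V : Matrix n n ℂ) (ψ : n → ℂ)
    {U : Set ℂ} (hU : ∀ z ∈ U, IsUnit (A + z • V)) :
    DifferentiableOn ℂ (resolventForm A V ψ) U := by
  let L : Matrix n n ℂ →ₗ[ℂ] ℂ :=
    { toFun := fun M => star ψ ⬝ᵥ M *ᵥ ψ
      map_add' := fun M N => by simp [add_mulVec, dotProduct_add]
      map_smul' := fun c M => by simp [smul_mulVec, dotProduct_smul] }
  have hinv : DifferentiableOn ℂ (fun z => Ring.inverse (A + z • V)) U :=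
    ((differentiableOn_const A).add (differentiableOn_id.smul_const V)).inverse hU
  unfold resolventForm
  simp_rw [nonsing_inv_eq_ringInverse]
  exact L.toContinuousLinearMap.differentiable.comp_differentiableOn hinv

end Pencil

theorem regMat_eq (m : ℕ) (H0 V : Matrix (Fin m) (Fin m) ℂ) (E lam eps del : ℝ) :
    regMat m H0 V E lam eps del
      = H0 - (E : ℂ) • 1 + (I * del) • 1 + ((lam : ℂ) + eps * I) • V := by
  rw [regMat, add_smul, mul_comm (eps : ℂ) I]
  abel

theorem Fval_eq_horizontalPairing {m : ℕ} {H0 V B : Matrix (Fin m) (Fin m) ℂ}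
    (hB : B.IsHermitian) (E : ℝ) (g : ℝ → ℝ) (φ : Fin m → ℂ) (eps del : ℝ) :
    Fval m H0 V B E g φ eps del
      = horizontalPairing g (resolventForm (H0 - (E : ℂ) • 1 + (I * del) • 1) V (B *ᵥ φ)) eps := by
  unfold Fval horizontalPairing resolventForm
  congr 1 with lam
  rw [kMat, regMat_eq, ← mulVec_mulVec, ← mulVec_mulVec, ← hB.star_mulVec_dotProduct]

theorem Fval_log_bound_general
    (m : ℕ) (H0 V B : Matrix (Fin m) (Fin m) ℂ)
    (hH0 : H0.IsHermitian) (hB : B.PosSemidef)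
    (c0 : ℝ) (hc0 : 0 < c0) (hVB : (V - (c0 : ℂ) • (B * B)).PosSemidef)
    (g : ℝ → ℝ) (hg : ContDiff ℝ 1 g)
    (hg1 : Integrable g) (hg2 : Integrable (deriv g))
    (φ : Fin m → ℂ) (hφ : (∑ i, ‖φ i‖ ^ 2) = 1)
    (E : ℝ) (del : ℝ) (hdel : 0 < del) (eps : ℝ) (heps0 : 0 < eps) (heps1 : eps < 1) :
    ‖Fval m H0 V B E g φ eps del‖ ≤
      c0⁻¹ * (∫ x, |deriv g x|) * |Real.log eps| + c0⁻¹ * ∫ x, |g x| := by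
  have hH : (H0 - (E : ℂ) • 1).IsHermitian := hH0.sub (isHermitian_one.smul (conj_ofReal E))
  have hV := PosSemidef.of_sub_smul_mul_self hB.isHermitian hc0.le hVB
  have hφ1 : ‖toLp 2 φ‖ ≤ 1 := by simp [EuclideanSpace.norm_eq, hφ]
  rw [Fval_eq_horizontalPairing hB.isHermitian]
  exact norm_horizontalPairing_le
    (differentiableOn_resolventForm _ _ _ fun z hz => isUnit_pencil hH hV hdel hz.le)
    (fun z hz => norm_resolventForm_le hH hB.isHermitian hc0 hVB hdel hφ1 hz)
    (hg.differentiable one_ne_zero) hg1 hg2 heps0 heps1.le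

/-- for `g ∈ C¹` with `g, g' ∈ L¹`, a unit vector `φ`, `δ > 0` and
`ε ∈ (0,1)`, `|F(ε, δ)| ≤ c0⁻¹ ‖g'‖₁ |log ε| + c0⁻¹ ‖g‖₁`. -/
theorem Fval_log_bound
    (m : ℕ) (hm : 1 ≤ m) (H0 V B : Matrix (Fin m) (Fin m) ℂ)
    (hH0 : H0.IsHermitian) (hV : V.IsHermitian) (hB : B.PosSemidef)
    (c0 : ℝ) (hc0 : 0 < c0) (hVB : (V - (c0 : ℂ) • (B * B)).PosSemidef)
    (g : ℝ → ℝ) (hg : ContDiff ℝ 1 g)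
    (hg1 : Integrable g) (hg2 : Integrable (deriv g))
    (φ : Fin m → ℂ) (hφ : (∑ i, ‖φ i‖ ^ 2) = 1)
    (E : ℝ) (del : ℝ) (hdel : 0 < del) (eps : ℝ) (heps0 : 0 < eps) (heps1 : eps < 1) :
    ‖Fval m H0 V B E g φ eps del‖ ≤
      c0⁻¹ * (∫ x, |deriv g x|) * |Real.log eps| + c0⁻¹ * ∫ x, |g x| :=
  Fval_log_bound_general m H0 V B hH0 hB c0 hc0 hVB g hg hg1 hg2 φ hφ E del hdel eps heps0 heps1

end
end
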